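/- Let X be a set, d₁, d₂ two distances on it and m₁, m₂ two measures such that both (X,d₁,m₁) and (X,d₂,m₂) are complete separable length metric measure spaces with non-negative Borel measures finite on bounded sets and full support. Assume m₂ ≤ C·m₁ for some C > 0 and d₁ ≤ L·d₂ for some L > 0. Then the Sobolev classes satisfy S(X₁) ⊂ S(X₂), and for every f ∈ S(X₁) the inequality |Df|₂ ≤ L·|Df|₁ holds m₂-almost everywhere, where |Df|₁, |Df|₂ denote the minimal weak upper gradients in (X,d₁,m₁) and (X,d₂,m₂) respectively. -/

import Mathlib

open MeasureTheory Filter Set Metric Topology ENNReal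

noncomputable section

namespace MMS

/-- The space of continuous curves defined on `[0,1]` with values in `Z`. -/
abbrev Curve (Z : Type*) [MetricSpace Z] : Type _ := C(unitInterval, Z)

instance (Z : Type*) [MetricSpace Z] : MeasurableSpace (Curve Z) := borel _
instance (Z : Type*) [MetricSpace Z] : BorelSpace (Curve Z) := ⟨rfl⟩

/-- The projection of `ℝ` onto `[0,1]`. -/
def pr (t : ℝ) : unitInterval := Set.projIcc 0 1 zero_le_one t

variable {Z : Type*} [MetricSpace Z]

/-- The metric speed (metric derivative) of a curve at a point `t ∈ [0,1]`,
defined as `limsup_{s → t} dist (γ s) (γ t) / |s - t|`. -/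
def speed (γ : Curve Z) (t : unitInterval) : ℝ :=
  limsup (fun s : unitInterval => dist (γ s) (γ t) / dist s t) (𝓝[≠] t)

/-- The metric speed as a function of a real parameter. -/
def speedR (γ : Curve Z) (t : ℝ) : ℝ := speed γ (pr t)

/-- A curve is absolutely continuous if `dist (γ s) (γ t) ≤ ∫_s^t G` for some
integrable nonnegative `G`. -/
def IsAC (γ : Curve Z) : Prop :=
  ∃ G : ℝ → ℝ, (∀ t, 0 ≤ G t) ∧ IntegrableOn G (Icc (0:ℝ) 1) ∧
    ∀ s t : unitInterval, s ≤ t → dist (γ s) (γ t) ≤ ∫ r in (s : ℝ)..(t : ℝ), G r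

/-- A curve is in `AC²` if `dist (γ s) (γ t) ≤ ∫_s^t G` for some square-integrable
nonnegative `G`. -/
def IsAC2 (γ : Curve Z) : Prop :=
  ∃ G : ℝ → ℝ, (∀ t, 0 ≤ G t) ∧ MemLp G 2 (volume.restrict (Icc (0:ℝ) 1)) ∧
    ∀ s t : unitInterval, s ≤ t → dist (γ s) (γ t) ≤ ∫ r in (s : ℝ)..(t : ℝ), G r

/-- The kinetic energy `∫₀¹ |γ̇_t|² dt` of a curve. -/
def energyE (γ : Curve Z) : ℝ≥0∞ :=
  ∫⁻ t in Icc (0:ℝ) 1, ENNReal.ofReal ((speedR γ t) ^ 2)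

/-- The length `∫₀¹ |γ̇_t| dt` of a curve. -/
def lengthE (γ : Curve Z) : ℝ≥0∞ :=
  ∫⁻ t in Icc (0:ℝ) 1, ENNReal.ofReal (speedR γ t)

/-- Evaluation map. -/
def ev (t : unitInterval) : Curve Z → Z := fun γ => γ t

variable [MeasurableSpace Z]

/-- A test plan: a probability measure on curves, concentrated on `AC²` curves, with
finite total kinetic energy and marginals bounded by a constant multiple of `μ`. -/
structure IsTestPlan (μ : Measure Z) (π : Measure (Curve Z)) : Prop where
  prob : IsProbabilityMeasure π
  ac : ∀ᵐ γ ∂π, IsAC2 γ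
  finite_energy : ∫⁻ γ, energyE γ ∂π < ⊤
  compression : ∃ C : ℝ≥0∞, 0 < C ∧ C < ⊤ ∧ ∀ t : unitInterval, π.map (ev t) ≤ C • μ

/-- `G` is a weak upper gradient of `f`. -/
def IsWUG (μ : Measure Z) (f G : Z → ℝ) : Prop :=
  ∀ π : Measure (Curve Z), IsTestPlan μ π →
    ∫⁻ γ, ENNReal.ofReal |f (γ 1) - f (γ 0)| ∂π ≤
      ∫⁻ γ, (∫⁻ t in Icc (0:ℝ) 1, ENNReal.ofReal (G (γ (pr t)) * speedR γ t)) ∂π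

/-- Membership in the Sobolev class `S²`. -/
def MemS2 (μ : Measure Z) (f : Z → ℝ) : Prop :=
  Measurable f ∧ ∃ G : Z → ℝ, (∀ z, 0 ≤ G z) ∧ MemLp G 2 μ ∧ IsWUG μ f G

/-- Membership in the Sobolev space `W^{1,2} = S² ∩ L²`. -/
def MemW12 (μ : Measure Z) (f : Z → ℝ) : Prop :=
  MemLp f 2 μ ∧ MemS2 μ f

/-- `G` is the minimal weak upper gradient `|Df|` of `f`. -/
def IsMinWUG (μ : Measure Z) (f G : Z → ℝ) : Prop :=
  (∀ z, 0 ≤ G z) ∧ MemLp G 2 μ ∧ IsWUG μ f G ∧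
    ∀ G' : Z → ℝ, (∀ z, 0 ≤ G' z) → MemLp G' 2 μ → IsWUG μ f G' → ∀ᵐ z ∂μ, G z ≤ G' z

/-- Membership in `L²_loc`. -/
def MemL2loc (μ : Measure Z) (G : Z → ℝ) : Prop :=
  ∀ (z : Z) (r : ℝ), MemLp G 2 (μ.restrict (ball z r))

/-- Membership in the local Sobolev class `S²_loc`. -/
def MemS2loc (μ : Measure Z) (f : Z → ℝ) : Prop :=
  Measurable f ∧ ∃ G : Z → ℝ, (∀ z, 0 ≤ G z) ∧ MemL2loc μ G ∧ IsWUG μ f G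

/-- `G` is the minimal weak upper gradient of `f ∈ S²_loc`. -/
def IsMinWUGloc (μ : Measure Z) (f G : Z → ℝ) : Prop :=
  (∀ z, 0 ≤ G z) ∧ MemL2loc μ G ∧ IsWUG μ f G ∧
    ∀ G' : Z → ℝ, (∀ z, 0 ≤ G' z) → MemL2loc μ G' → IsWUG μ f G' → ∀ᵐ z ∂μ, G z ≤ G' z

/-- A length space: the distance is the infimum of lengths of absolutely continuous
curves joining two given points. -/
def IsLengthSpace (Z : Type*) [MetricSpace Z] : Prop :=
  ∀ x y : Z, ENNReal.ofReal (dist x y)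
    = ⨅ (γ : Curve Z) (_ : IsAC γ ∧ γ 0 = x ∧ γ 1 = y), lengthE γ

/-- The measure is finite on bounded sets and has full support. -/
def GoodMeasure (μ : Measure Z) : Prop :=
  (∀ s : Set Z, Bornology.IsBounded s → μ s < ⊤) ∧
    ∀ (z : Z) (r : ℝ), 0 < r → 0 < μ (ball z r)

/-! Pushing a test plan on `X₂` forward along the `L`-Lipschitz injection `e` gives a test plan
on `X₁`: curves stay `AC²`, metric speeds grow by a factor at most `L` (energies by `L²`), and
the marginals stay bounded because `e_♯ m₂ ≤ C m₁`. Testing a weak upper gradient `G` of `f` on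
`X₁` against pushed plans shows that `L · G ∘ e` is a weak upper gradient of `f ∘ e` on `X₂`,
which gives both the inclusion and, by minimality of `|Df|₂`, the bound.

Since a real `limsup` of an unbounded function is the junk value `0`, the speed bound needs the
difference quotients of an absolutely continuous curve to be bounded at a.e. time; they are
dominated by those of a monotone function, which is differentiable a.e. -/

open scoped NNReal

section Curves

variable {X Y : Type*} [MetricSpace X] [MetricSpace Y]

lemma speed_nonneg (γ : Curve X) (t : unitInterval) : 0 ≤ speed γ t := by
  refine Real.sInf_nonneg fun a ha => ?_
  obtain ⟨s, hs⟩ := (show ∀ᶠ s in 𝓝[≠] t, dist (γ s) (γ t) / dist s t ≤ a from ha).exists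
  exact (div_nonneg dist_nonneg dist_nonneg).trans hs

lemma speed_comp_le_of_isBoundedUnder {K : ℝ≥0} {φ : C(X, Y)} (hφ : LipschitzWith K φ)
    {γ : Curve X} {t : unitInterval}
    (hγ : IsBoundedUnder (· ≤ ·) (𝓝[≠] t) fun s => dist (γ s) (γ t) / dist s t) :
    speed (φ.comp γ) t ≤ K * speed γ t := by
  set q : unitInterval → ℝ := fun s => dist (γ s) (γ t) / dist s t
  have hq : ∀ s, 0 ≤ q s := fun s => div_nonneg dist_nonneg dist_nonneg
  have hK : IsBoundedUnder (· ≤ ·) (𝓝[≠] t) fun _ : unitInterval => (K : ℝ) :=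
    isBoundedUnder_const
  calc speed (φ.comp γ) t ≤ limsup ((fun _ => (K : ℝ)) * q) (𝓝[≠] t) := by
        refine limsup_le_limsup (Eventually.of_forall fun s => ?_)
          (isCoboundedUnder_le_of_le _ fun s => div_nonneg dist_nonneg dist_nonneg)
          (isBoundedUnder_le_mul_of_nonneg (Frequently.of_forall fun _ => K.2) hK
            (Eventually.of_forall hq) hγ)
        rw [Pi.mul_apply, ← mul_div_assoc]
        exact div_le_div_of_nonneg_right (hφ.dist_le_mul _ _) dist_nonneg
    _ ≤ limsup (fun _ => (K : ℝ)) (𝓝[≠] t) * speed γ t :=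
        limsup_mul_le (Frequently.of_forall fun _ => K.2) hK (Eventually.of_forall hq) hγ
    _ = K * speed γ t := by rw [limsup_const]

lemma IsAC2.isAC {γ : Curve X} (hγ : IsAC2 γ) : IsAC γ :=
  let ⟨G, hG0, hG2, hGd⟩ := hγ
  ⟨G, hG0, hG2.integrable one_le_two, hGd⟩

lemma IsAC2.comp {K : ℝ≥0} {φ : C(X, Y)} (hφ : LipschitzWith K φ) {γ : Curve X}
    (hγ : IsAC2 γ) : IsAC2 (φ.comp γ) := by
  obtain ⟨G, hG0, hG2, hGd⟩ := hγ
  refine ⟨fun r => K * G r, fun r => mul_nonneg K.2 (hG0 r), hG2.const_mul (K : ℝ), fun s t hst => ?_⟩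
  rw [intervalIntegral.integral_const_mul]
  exact (hφ.dist_le_mul _ _).trans (mul_le_mul_of_nonneg_left (hGd s t hst) K.2)

/-- `F` is the primitive of the density `G` of `γ`, extended by zero outside `[0,1]`. -/
lemma IsAC.exists_monotone_dist_le {γ : Curve X} (hγ : IsAC γ) :
    ∃ F : ℝ → ℝ, Monotone F ∧ ∀ s t : unitInterval, dist (γ s) (γ t) ≤ |F t - F s| := by
  obtain ⟨G, hG0, hGint, hGd⟩ := hγ
  set g := (Icc (0 : ℝ) 1).indicator G
  have hg : ∀ a b, IntervalIntegrable g volume a b := fun a b =>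
    ((integrable_indicator_iff measurableSet_Icc).2 hGint).intervalIntegrable
  have hg0 : ∀ x, 0 ≤ g x := indicator_nonneg fun x _ => hG0 x
  have hincr : ∀ a b, (∫ y in 0..b, g y) - ∫ y in 0..a, g y = ∫ y in a..b, g y := fun a b =>
    intervalIntegral.integral_interval_sub_left (hg 0 b) (hg 0 a)
  refine ⟨fun x => ∫ y in 0..x, g y, fun a b hab => ?_, fun s t => ?_⟩
  · have := hincr a b
    have := intervalIntegral.integral_nonneg (μ := volume) hab fun x _ => hg0 x
    linarith
  · wlog hst : s ≤ t generalizing s t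
    · rw [dist_comm, abs_sub_comm]
      exact this t s (le_of_not_ge hst)
    refine (hGd s t hst).trans (le_of_eq_of_le ?_ (le_abs_self _))
    rw [hincr]
    refine intervalIntegral.integral_congr fun x hx => (indicator_of_mem ?_ G).symm
    rw [uIcc_of_le (Subtype.coe_le_coe.2 hst)] at hx
    exact ⟨s.2.1.trans hx.1, hx.2.trans t.2.2⟩

lemma isBoundedUnder_speed_of_differentiableAt {γ : Curve X} {F : ℝ → ℝ}
    (hF : ∀ s t : unitInterval, dist (γ s) (γ t) ≤ |F t - F s|) {t : unitInterval}
    (hFt : DifferentiableAt ℝ F t) :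
    IsBoundedUnder (· ≤ ·) (𝓝[≠] t) fun s => dist (γ s) (γ t) / dist s t := by
  obtain ⟨c, hc⟩ := (hFt.isBigO_sub.comp_tendsto (continuous_subtype_val.tendsto t)).bound
  refine ⟨c, eventually_map.2 ?_⟩
  filter_upwards [nhdsWithin_le_nhds hc, self_mem_nhdsWithin] with s hs hst
  rw [div_le_iff₀ (dist_pos.2 hst)]
  refine (hF s t).trans ?_
  simpa [Subtype.dist_eq, Real.dist_eq, abs_sub_comm] using hs

lemma IsAC.ae_isBoundedUnder_speed {γ : Curve X} (hγ : IsAC γ) :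
    ∀ᵐ t ∂(volume.restrict (Icc (0 : ℝ) 1)), IsBoundedUnder (· ≤ ·) (𝓝[≠] (pr t))
      fun s => dist (γ s) (γ (pr t)) / dist s (pr t) := by
  obtain ⟨F, hFmono, hF⟩ := hγ.exists_monotone_dist_le
  filter_upwards [ae_restrict_of_ae hFmono.ae_differentiableAt,
    ae_restrict_mem measurableSet_Icc] with t hFt ht
  refine isBoundedUnder_speed_of_differentiableAt hF ?_
  rwa [pr, projIcc_of_mem _ ht]

lemma IsAC.ae_speedR_comp_le {K : ℝ≥0} {φ : C(X, Y)} (hφ : LipschitzWith K φ) {γ : Curve X}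
    (hγ : IsAC γ) :
    ∀ᵐ t ∂(volume.restrict (Icc (0 : ℝ) 1)), speedR (φ.comp γ) t ≤ K * speedR γ t :=
  hγ.ae_isBoundedUnder_speed.mono fun _ ht => speed_comp_le_of_isBoundedUnder hφ ht

lemma IsAC.energyE_comp_le {K : ℝ≥0} {φ : C(X, Y)} (hφ : LipschitzWith K φ) {γ : Curve X}
    (hγ : IsAC γ) : energyE (φ.comp γ) ≤ ENNReal.ofReal ((K : ℝ) ^ 2) * energyE γ := by
  rw [energyE, energyE, ← lintegral_const_mul' _ _ ofReal_ne_top]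
  refine lintegral_mono_ae ((hγ.ae_speedR_comp_le hφ).mono fun t ht => ?_)
  rw [← ENNReal.ofReal_mul (sq_nonneg _), ← mul_pow]
  exact ENNReal.ofReal_le_ofReal (pow_le_pow_left₀ (speed_nonneg _ _) ht 2)

lemma measurableEmbedding_comp [CompleteSpace X] [TopologicalSpace.SeparableSpace X] {φ : C(X, Y)}
    (hinj : Function.Injective φ) : MeasurableEmbedding (φ.comp : Curve X → Curve Y) :=
  φ.continuous_postcomp.measurableEmbedding fun _ _ h =>
    ContinuousMap.ext fun s => hinj (DFunLike.congr_fun h s)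

end Curves

section TestPlans

variable {X Y : Type*} [MetricSpace X] [MeasurableSpace X] [BorelSpace X]
  [MetricSpace Y] [MeasurableSpace Y] [BorelSpace Y]

lemma measurable_ev (t : unitInterval) : Measurable (ev t : Curve X → X) :=
  (continuous_eval_const t).measurable

lemma map_ev_map_comp (φ : C(X, Y)) (π : Measure (Curve X)) (t : unitInterval) :
    (π.map φ.comp).map (ev t) = (π.map (ev t)).map φ := by
  rw [Measure.map_map (measurable_ev t) φ.continuous_postcomp.measurable,
    Measure.map_map φ.continuous.measurable (measurable_ev t)]
  rfl

variable {μ : Measure X} {ν : Measure Y} {K : ℝ≥0} {φ : C(X, Y)} {C : ℝ≥0∞}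

variable {μ : Measure X} {ν : Measure Y} {K : ℝ≥0} {φ : C(X, Y)} {C : ℝ≥0∞}

lemma IsTestPlan.map_comp [CompleteSpace X] [TopologicalSpace.SeparableSpace X] {π : Measure (Curve X)}
    (hπ : IsTestPlan μ π) (hφ : LipschitzWith K φ) (hinj : Function.Injective φ)
    (hm : μ.map φ ≤ C • ν) (hC₀ : C ≠ 0) (hC : C ≠ ⊤) : IsTestPlan ν (π.map φ.comp) := by
  have hE := measurableEmbedding_comp hinj
  have := hπ.prob
  obtain ⟨C', hC'₀, hC', hπC'⟩ := hπ.compression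
  refine ⟨Measure.isProbabilityMeasure_map hE.measurable.aemeasurable, ?_, ?_, ?_⟩
  · rw [hE.ae_map_iff]
    exact hπ.ac.mono fun γ hγ => hγ.comp hφ
  · rw [hE.lintegral_map]
    calc ∫⁻ γ, energyE (φ.comp γ) ∂π ≤ ∫⁻ γ, ENNReal.ofReal ((K : ℝ) ^ 2) * energyE γ ∂π :=
          lintegral_mono_ae (hπ.ac.mono fun γ hγ => hγ.isAC.energyE_comp_le hφ)
      _ < ⊤ := by
          rw [lintegral_const_mul' _ _ ofReal_ne_top]
          exact ENNReal.mul_lt_top ofReal_lt_top hπ.finite_energy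
  · refine ⟨C' * C, ENNReal.mul_pos hC'₀.ne' hC₀, ENNReal.mul_lt_top hC' hC.lt_top, fun t => ?_⟩
    calc (π.map φ.comp).map (ev t) = (π.map (ev t)).map φ := map_ev_map_comp φ π t
      _ ≤ (C' • μ).map φ := Measure.map_mono (hπC' t) φ.continuous.measurable
      _ = C' • μ.map φ := Measure.map_smul _ _ _
      _ ≤ C' • C • ν := by gcongr
      _ = (C' * C) • ν := smul_smul _ _ _

theorem IsWUG.comp [CompleteSpace X] [TopologicalSpace.SeparableSpace X] (hφ : LipschitzWith K φ)
    (hinj : Function.Injective φ) (hm : μ.map φ ≤ C • ν) (hC₀ : C ≠ 0) (hC : C ≠ ⊤)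
    {f G : Y → ℝ} (hG : ∀ y, 0 ≤ G y) (hfG : IsWUG ν f G) :
    IsWUG μ (f ∘ φ) fun x => K * G (φ x) := by
  intro π hπ
  have hE := measurableEmbedding_comp hinj
  calc ∫⁻ γ, ENNReal.ofReal |f (φ (γ 1)) - f (φ (γ 0))| ∂π
      = ∫⁻ σ, ENNReal.ofReal |f (σ 1) - f (σ 0)| ∂π.map φ.comp :=
        (hE.lintegral_map fun σ => ENNReal.ofReal |f (σ 1) - f (σ 0)|).symm
    _ ≤ ∫⁻ σ, (∫⁻ t in Icc (0 : ℝ) 1, ENNReal.ofReal (G (σ (pr t)) * speedR σ t)) ∂π.map φ.comp :=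
        hfG _ (hπ.map_comp hφ hinj hm hC₀ hC)
    _ = ∫⁻ γ, (∫⁻ t in Icc (0 : ℝ) 1,
          ENNReal.ofReal (G (φ (γ (pr t))) * speedR (φ.comp γ) t)) ∂π := hE.lintegral_map _
    _ ≤ ∫⁻ γ, (∫⁻ t in Icc (0 : ℝ) 1,
          ENNReal.ofReal (K * G (φ (γ (pr t))) * speedR γ t)) ∂π := by
        refine lintegral_mono_ae (hπ.ac.mono fun γ hγ => lintegral_mono_ae
          ((hγ.isAC.ae_speedR_comp_le hφ).mono fun t ht => ENNReal.ofReal_le_ofReal ?_))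
        rw [mul_comm (K : ℝ), mul_assoc]
        exact mul_le_mul_of_nonneg_left ht (hG _)

end TestPlans

theorem sobolev_class_comparison_general
    {X₁ : Type*} [MetricSpace X₁]
    [MeasurableSpace X₁] [BorelSpace X₁]
    {X₂ : Type*} [MetricSpace X₂] [CompleteSpace X₂] [TopologicalSpace.SeparableSpace X₂]
    [MeasurableSpace X₂] [BorelSpace X₂]
    (μ₁ : Measure X₁) (μ₂ : Measure X₂)
    (e : X₂ ≃ X₁)
    (C : ℝ≥0∞) (hC : 0 < C ∧ C < ⊤) (hm : Measure.map e μ₂ ≤ C • μ₁)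
    (L : ℝ) (hL : 0 < L) (hd : ∀ a b : X₂, dist (e a) (e b) ≤ L * dist a b) :
    (∀ f : X₁ → ℝ, MemS2 μ₁ f → MemS2 μ₂ (fun a => f (e a)))
    ∧
    (∀ (f : X₁ → ℝ) (G₁ : X₁ → ℝ) (G₂ : X₂ → ℝ), MemS2 μ₁ f →
      IsMinWUG μ₁ f G₁ → IsMinWUG μ₂ (fun a => f (e a)) G₂ →
      ∀ᵐ a ∂μ₂, G₂ a ≤ L * G₁ (e a)) := by
  have hlip : LipschitzWith L.toNNReal e := LipschitzWith.of_dist_le' hd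
  have hL' : (L.toNNReal : ℝ) = L := Real.coe_toNNReal L hL.le
  let φ : C(X₂, X₁) := ⟨e, hlip.continuous⟩
  have transfer : ∀ f G : X₁ → ℝ, (∀ x, 0 ≤ G x) → MemLp G 2 μ₁ → IsWUG μ₁ f G →
      (∀ a, 0 ≤ L * G (e a)) ∧ MemLp (fun a => L * G (e a)) 2 μ₂ ∧
        IsWUG μ₂ (fun a => f (e a)) fun a => L * G (e a) := by
    intro f G hG0 hG hfG
    refine ⟨fun a => mul_nonneg hL.le (hG0 _), ?_, ?_⟩
    · exact (((hG.smul_measure hC.2.ne).mono_measure hm).comp_of_map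
        hlip.continuous.aemeasurable).const_mul L
    · have := hfG.comp (φ := φ) hlip e.injective hm hC.1.ne' hC.2.ne hG0
      rwa [hL'] at this
  refine ⟨fun f ⟨hf, G, hG0, hG, hfG⟩ => ?_, fun f G₁ G₂ _ hG₁ hG₂ => ?_⟩
  · exact ⟨hf.comp hlip.continuous.measurable, _, transfer f G hG0 hG hfG⟩
  · obtain ⟨hG0, hG, hfG⟩ := transfer f G₁ hG₁.1 hG₁.2.1 hG₁.2.2.1
    exact hG₂.2.2.2 _ hG0 hG hfG

/-- **Lemma (comparison of Sobolev classes).**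
If on the same underlying set (`X₂ ≃ X₁` via `e`) one has two metric measure structures
with `m₂ ≤ C·m₁` and `d₁ ≤ L·d₂`, then `S(X₁) ⊂ S(X₂)` and `|Df|₂ ≤ L·|Df|₁`
holds `m₂`-a.e. for every `f ∈ S(X₁)`. -/
theorem sobolev_class_comparison
    {X₁ : Type*} [MetricSpace X₁] [CompleteSpace X₁] [TopologicalSpace.SeparableSpace X₁]
    [MeasurableSpace X₁] [BorelSpace X₁]
    {X₂ : Type*} [MetricSpace X₂] [CompleteSpace X₂] [TopologicalSpace.SeparableSpace X₂]
    [MeasurableSpace X₂] [BorelSpace X₂]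
    (h₁ : IsLengthSpace X₁) (h₂ : IsLengthSpace X₂)
    (μ₁ : Measure X₁) (hμ₁ : GoodMeasure μ₁) (μ₂ : Measure X₂) (hμ₂ : GoodMeasure μ₂)
    (e : X₂ ≃ X₁)
    (C : ℝ≥0∞) (hC : 0 < C ∧ C < ⊤) (hm : Measure.map e μ₂ ≤ C • μ₁)
    (L : ℝ) (hL : 0 < L) (hd : ∀ a b : X₂, dist (e a) (e b) ≤ L * dist a b) :
    (∀ f : X₁ → ℝ, MemS2 μ₁ f → MemS2 μ₂ (fun a => f (e a)))
    ∧
    (∀ (f : X₁ → ℝ) (G₁ : X₁ → ℝ) (G₂ : X₂ → ℝ), MemS2 μ₁ f →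
      IsMinWUG μ₁ f G₁ → IsMinWUG μ₂ (fun a => f (e a)) G₂ →
      ∀ᵐ a ∂μ₂, G₂ a ≤ L * G₁ (e a)) :=
  sobolev_class_comparison_general μ₁ μ₂ e C hC hm L hL hd

end MMS
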